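/- For any 4-regular graph G, the minimum number of Wordle guesses W(D_G) over the dictionary D_G satisfies γ(G) ≤ W(D_G) ≤ γ(G) + 4. -/

import Mathlib

/-- History of feedbacks after `n` guesses made by strategy `strat` against secret `w`. -/
def hist {α M : Type*} (strat : List M → α) (f : α → α → M) (w : α) : ℕ → List M
  | 0 => []
  | n + 1 => hist strat f w n ++ [f (strat (hist strat f w n)) w]

/-- The guesser can guarantee to discover any secret word of `D` within `ℓ` guesses. -/
def WinsWithin {α M : Type*} (D : Finset α) (f : α → α → M) (ℓ : ℕ) : Prop :=
  ∃ strat : List M → α,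
    (∀ w ∈ D, ∀ t, t < ℓ → strat (hist strat f w t) ∈ D) ∧
    ∀ w ∈ D, ∃ t < ℓ, strat (hist strat f w t) = w

/-- Minimum number of guesses sufficient for a guaranteed win. -/
noncomputable def WNum {α M : Type*} (D : Finset α) (f : α → α → M) : ℕ :=
  sInf {ℓ | WinsWithin D f ℓ}

/-- Wordle feedback: green positions, and for each letter the number of yellow marks
(the standard marking rule assigns, per letter, `min` of its non-green multiplicities
in the guess and in the secret). -/
def feedback {V : Type*} [DecidableEq V] (p w : Fin 5 → V) : (Fin 5 → Bool) × (V → ℕ) :=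
  ⟨fun i => decide (p i = w i),
   fun a => min ((Finset.univ.filter (fun i => p i = a ∧ p i ≠ w i)).card)
                ((Finset.univ.filter (fun i => w i = a ∧ p i ≠ w i)).card)⟩

/-- The word `w_v = (v, n₁, n₂, n₃, n₄)`. -/
def wv {V : Type*} (nbr : V → Fin 4 → V) (v : V) : Fin 5 → V :=
  fun i => Fin.cases v (fun j => nbr v j) i

/-- The constant word `w'_v = (v,v,v,v,v)`. -/
def wv' {V : Type*} (v : V) : Fin 5 → V := fun _ => v

/-- The dictionary `D_G` built from the graph. -/
def DG {V : Type*} [Fintype V] [DecidableEq V] (nbr : V → Fin 4 → V) :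
    Finset (Fin 5 → V) :=
  Finset.univ.image (wv nbr) ∪ Finset.univ.image wv'

/-- `S` is a dominating set of `G`. -/
def Dominating {V : Type*} (G : SimpleGraph V) (S : Finset V) : Prop :=
  ∀ u, ∃ v ∈ S, u = v ∨ G.Adj v u

/-- The domination number `γ(G)`. -/
noncomputable def gamma {V : Type*} (G : SimpleGraph V) : ℕ :=
  sInf {n | ∃ S : Finset V, S.card ≤ n ∧ Dominating G S}

/-! Lower bound: follow the line of play on which every answer is blank. If a vertex `u` is not
dominated by the first letters of the guesses on that line, then `w'_u` shares no letter with any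
of them, so against `w'_u` the guesser never leaves that line and never guesses `w'_u`.

Upper bound: for a dominating set `S`, first guess `w_s` for every `s ∈ S`; the answers leave at
most four candidates. A secret whose first letter lies in `S` gets a green first letter from its
own probe and is determined. A word `w_x` with `x ∉ S` shows a yellow `x` to the probe of a
neighbour of `x` in `S`, which no constant word does; so `w'_u` with `u ∉ S` is only confused with
constant words, and the green `u` in the probe of a neighbour of `u` singles it out, while `w_u`
with `u ∉ S` is only confused with words `w_x` for `x` in the closed neighbourhood of `u` minus
`S`; that neighbourhood has at most five vertices, one of them in `S`. -/

section Strategy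

variable {α M : Type*}

theorem hist_length (strat : List M → α) (f : α → α → M) (w : α) (n : ℕ) :
    (hist strat f w n).length = n := by
  induction n with
  | zero => rfl
  | succ n ih => simp [hist, ih]

theorem hist_take (strat : List M → α) (f : α → α → M) (w : α) {m n : ℕ} (h : m ≤ n) :
    (hist strat f w n).take m = hist strat f w m := by
  induction n with
  | zero => rw [Nat.le_zero.1 h]; rfl
  | succ n ih =>
    rcases h.lt_or_eq with h | rfl
    · rw [hist, List.take_append_of_le_length (by rw [hist_length]; omega), ih (by omega)]
    · exact List.take_of_length_le (hist_length strat f w _).le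

theorem hist_eq_replicate {strat : List M → α} {f : α → α → M} {w : α} {z : M} {n : ℕ}
    (h : ∀ t < n, hist strat f w t = List.replicate t z →
      f (strat (List.replicate t z)) w = z) :
    hist strat f w n = List.replicate n z := by
  induction n with
  | zero => rfl
  | succ n ih =>
    have ih := ih fun t ht => h t (by omega)
    rw [hist, ih, h n (by omega) ih, List.replicate_succ']

theorem WNum_eq_zero_of_isEmpty [IsEmpty α] (D : Finset α) (f : α → α → M) : WNum D f = 0 :=
  Nat.sInf_eq_zero.2 <| Or.inr <|
    Set.eq_empty_of_forall_notMem fun _ ⟨strat, _⟩ => isEmptyElim (strat [])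

variable [DecidableEq M] (D : Finset α) (f : α → α → M) (P : List α) (d : α)

noncomputable def probeStrategy (h : List M) : α :=
  if h.length < P.length then P.getD h.length d
  else ((D.filter fun w => P.map (f · w) = h.take P.length).toList).getD (h.length - P.length) d

theorem probeStrategy_hist_of_lt (w : α) {t : ℕ} (ht : t < P.length) :
    probeStrategy D f P d (hist (probeStrategy D f P d) f w t) = P[t] := by
  rw [probeStrategy, hist_length, if_pos ht, List.getD_eq_getElem _ _ ht]

theorem hist_probeStrategy (w : α) {t : ℕ} (ht : t ≤ P.length) :
    hist (probeStrategy D f P d) f w t = (P.take t).map (f · w) := by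
  induction t with
  | zero => rfl
  | succ t ih =>
    have ht' : t < P.length := by omega
    rw [hist, probeStrategy_hist_of_lt D f P d w ht', ih ht'.le, List.take_add_one,
      List.getElem?_eq_getElem ht', List.map_append]
    rfl

theorem probeStrategy_hist_of_le (w : α) {t : ℕ} (ht : P.length ≤ t) :
    probeStrategy D f P d (hist (probeStrategy D f P d) f w t) =
      ((D.filter fun w' => P.map (f · w') = P.map (f · w)).toList).getD (t - P.length) d := by
  rw [probeStrategy, hist_length, if_neg (by omega), hist_take _ _ _ ht,
    hist_probeStrategy D f P d w le_rfl, List.take_length]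

theorem winsWithin_of_probes {m : ℕ} (hd : d ∈ D) (hP : ∀ p ∈ P, p ∈ D)
    (hclass : ∀ w ∈ D, (D.filter fun w' => ∀ p ∈ P, f p w' = f p w).card ≤ m) :
    WinsWithin D f (P.length + m) := by
  simp_rw [← List.map_inj_left] at hclass
  refine ⟨probeStrategy D f P d, fun w _ t _ => ?_, fun w hw => ?_⟩
  · rcases lt_or_ge t P.length with ht | ht
    · rw [probeStrategy_hist_of_lt D f P d w ht]
      exact hP _ (List.getElem_mem ht)
    · rw [probeStrategy_hist_of_le D f P d w ht]
      set C := (D.filter fun w' => P.map (f · w') = P.map (f · w)).toList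
      rcases lt_or_ge (t - P.length) C.length with hk | hk
      · rw [List.getD_eq_getElem _ _ hk]
        exact (Finset.mem_filter.1 (Finset.mem_toList.1 (List.getElem_mem hk))).1
      · rwa [List.getD_eq_default _ _ hk]
  · obtain ⟨k, hk, hget⟩ := List.mem_iff_getElem.1
      (Finset.mem_toList.2 (Finset.mem_filter.2 ⟨hw, rfl⟩) :
        w ∈ (D.filter fun w' => P.map (f · w') = P.map (f · w)).toList)
    have hkm : k < m := (Finset.length_toList _ ▸ hk).trans_le (hclass w hw)
    refine ⟨P.length + k, by omega, ?_⟩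
    rw [probeStrategy_hist_of_le D f P d w (by omega), Nat.add_sub_cancel_left,
      List.getD_eq_getElem _ _ hk, hget]

end Strategy

section Feedback

variable {V : Type*} [DecidableEq V] {p w w₁ w₂ : Fin 5 → V}

theorem feedback_green_iff (h : feedback p w₁ = feedback p w₂) (i : Fin 5) :
    p i = w₁ i ↔ p i = w₂ i :=
  decide_eq_decide.1 (congrFun (congrArg Prod.fst h) i)

theorem eq_of_feedback_eq_feedback_self (h : feedback p w = feedback p p) : w = p :=
  funext fun i => ((feedback_green_iff h i).2 rfl).symm

theorem feedback_wv'_snd (p : Fin 5 → V) (u : V) : (feedback p (wv' u)).2 = 0 := by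
  funext a
  simp only [feedback, wv', Pi.zero_apply]
  rcases eq_or_ne u a with rfl | hne
  · simp
  · simp [hne]

theorem exists_eq_of_feedback_snd_pos {a : V} (h : 0 < (feedback p w).2 a) : ∃ i, w i = a := by
  obtain ⟨i, hi⟩ := Finset.card_pos.1 (h.trans_le (min_le_right _ _))
  exact ⟨i, (Finset.mem_filter.1 hi).2.1⟩

theorem feedback_snd_pos {a : V} {i j : Fin 5} (hi : p i = a) (hi' : p i ≠ w i) (hj : w j = a)
    (hj' : p j ≠ w j) : 0 < (feedback p w).2 a :=
  lt_min (Finset.card_pos.2 ⟨i, Finset.mem_filter.2 ⟨Finset.mem_univ _, hi, hi'⟩⟩)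
    (Finset.card_pos.2 ⟨j, Finset.mem_filter.2 ⟨Finset.mem_univ _, hj, hj'⟩⟩)

theorem feedback_wv'_eq_of_forall_ne {u : V} (h : ∀ i, p i ≠ u) :
    feedback p (wv' u) = (fun _ => false, 0) :=
  Prod.ext (funext fun i => decide_eq_false (h i)) (feedback_wv'_snd p u)

theorem center_eq_of_center_mem {nbr : V → Fin 4 → V} {S : Finset V}
    (h : ∀ s ∈ S, feedback (wv nbr s) w₁ = feedback (wv nbr s) w₂) (hs : w₁ 0 ∈ S) :
    w₂ 0 = w₁ 0 :=
  ((feedback_green_iff (h _ hs) 0).1 rfl).symm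

end Feedback

section Domination

variable {V : Type*} {G : SimpleGraph V} {S : Finset V}

theorem exists_dominating_card_le_gamma [Fintype V] (G : SimpleGraph V) :
    ∃ S : Finset V, S.card ≤ gamma G ∧ Dominating G S := by
  have hne : {n | ∃ S : Finset V, S.card ≤ n ∧ Dominating G S}.Nonempty :=
    ⟨_, Finset.univ, le_rfl, fun u => ⟨u, Finset.mem_univ u, Or.inl rfl⟩⟩
  exact Nat.sInf_mem hne

theorem exists_adj_of_not_mem (hS : Dominating G S) {u : V} (hu : u ∉ S) :
    ∃ s ∈ S, G.Adj s u := by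
  obtain ⟨s, hs, rfl | hsu⟩ := hS u
  exacts [absurd hs hu, ⟨s, hs, hsu⟩]

end Domination

section Graph

variable {V : Type*} [Fintype V] [DecidableEq V] {G : SimpleGraph V} [DecidableRel G.Adj]
  {nbr : V → Fin 4 → V} {S : Finset V} {u : V} {w w' : Fin 5 → V}

theorem mem_DG_iff : w ∈ DG nbr ↔ ∃ x, w = wv nbr x ∨ w = wv' x := by
  simp [DG, eq_comm, exists_or]

theorem wv_mem_DG (x : V) : wv nbr x ∈ DG nbr := mem_DG_iff.2 ⟨x, Or.inl rfl⟩

theorem wv'_mem_DG (x : V) : wv' x ∈ DG nbr := mem_DG_iff.2 ⟨x, Or.inr rfl⟩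

theorem adj_iff_exists_nbr_eq (hnbr : ∀ v, Finset.univ.image (nbr v) = G.neighborFinset v)
    {v x : V} : G.Adj v x ↔ ∃ j, nbr v j = x := by
  rw [← G.mem_neighborFinset, ← hnbr]
  simp

theorem nbr_ne (hnbr : ∀ v, Finset.univ.image (nbr v) = G.neighborFinset v) (v : V) (j : Fin 4) :
    nbr v j ≠ v :=
  ((adj_iff_exists_nbr_eq hnbr).2 ⟨j, rfl⟩).ne'

theorem card_neighborFinset_le_four (hnbr : ∀ v, Finset.univ.image (nbr v) = G.neighborFinset v)
    (v : V) : (G.neighborFinset v).card ≤ 4 :=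
  hnbr v ▸ Finset.card_image_le.trans (by simp)

theorem eq_or_adj_of_mem_DG (hnbr : ∀ v, Finset.univ.image (nbr v) = G.neighborFinset v)
    (hw : w ∈ DG nbr) {i : Fin 5} (hi : w i = u) : w 0 = u ∨ G.Adj (w 0) u := by
  obtain ⟨x, rfl | rfl⟩ := mem_DG_iff.1 hw
  · cases i using Fin.cases with
    | zero => exact Or.inl hi
    | succ j => exact Or.inr ((adj_iff_exists_nbr_eq hnbr).2 ⟨j, hi⟩)
  · exact Or.inl hi

theorem feedback_wv_wv_snd_pos (hnbr : ∀ v, Finset.univ.image (nbr v) = G.neighborFinset v)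
    {s : V} (hsu : G.Adj s u) : 0 < (feedback (wv nbr s) (wv nbr u)).2 u := by
  obtain ⟨j, rfl⟩ := (adj_iff_exists_nbr_eq hnbr).1 hsu
  exact feedback_snd_pos (i := j.succ) (j := 0) rfl (nbr_ne hnbr _ j).symm rfl
    (nbr_ne hnbr s j).symm

theorem gamma_le_of_winsWithin (hnbr : ∀ v, Finset.univ.image (nbr v) = G.neighborFinset v)
    {ℓ : ℕ} (hwin : WinsWithin (DG nbr) feedback ℓ) : gamma G ≤ ℓ := by
  obtain ⟨strat, hmem, hhit⟩ := hwin
  let blank : (Fin 5 → Bool) × (V → ℕ) := (fun _ => false, 0)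
  let q : ℕ → Fin 5 → V := fun t => strat (List.replicate t blank)
  have hq : ∀ t < ℓ, q t 0 ∈ (Finset.range ℓ).image (q · 0) :=
    fun t ht => Finset.mem_image_of_mem _ (Finset.mem_range.2 ht)
  refine Nat.sInf_le ⟨(Finset.range ℓ).image (q · 0),
    Finset.card_image_le.trans (Finset.card_range ℓ).le, fun u => ?_⟩
  by_contra! hu
  obtain ⟨t, ht, hguess⟩ := hhit _ (wv'_mem_DG u)
  have hblank : hist strat feedback (wv' u) t = List.replicate t blank :=
    hist_eq_replicate fun t' ht' hrep => by
      have hqD : q t' ∈ DG nbr := by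
        simpa only [hrep] using hmem _ (wv'_mem_DG u) t' (ht'.trans ht)
      obtain ⟨hne, hnadj⟩ := hu _ (hq t' (ht'.trans ht))
      exact feedback_wv'_eq_of_forall_ne fun i hi =>
        (eq_or_adj_of_mem_DG hnbr hqD hi).elim (fun h => hne h.symm) hnadj
  rw [hblank] at hguess
  exact (hu _ (hq t ht)).1 (congrFun hguess 0).symm

theorem eq_of_center_mem (hw : w ∈ DG nbr) (hw' : w' ∈ DG nbr)
    (h : ∀ s ∈ S, feedback (wv nbr s) w' = feedback (wv nbr s) w) (hu : w 0 ∈ S) :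
    w' = w := by
  have h0 : w' 0 = w 0 := center_eq_of_center_mem (fun s hs => (h s hs).symm) hu
  obtain ⟨u, rfl | rfl⟩ := mem_DG_iff.1 hw
  · exact eq_of_feedback_eq_feedback_self (h u hu)
  obtain ⟨x, rfl | rfl⟩ := mem_DG_iff.1 hw'
  · obtain rfl : x = u := h0
    exact (eq_of_feedback_eq_feedback_self (h x hu).symm).symm
  · obtain rfl : x = u := h0
    rfl

theorem eq_wv'_of_not_mem (hnbr : ∀ v, Finset.univ.image (nbr v) = G.neighborFinset v)
    (hS : Dominating G S) (hu : u ∉ S) (hw' : w' ∈ DG nbr)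
    (h : ∀ s ∈ S, feedback (wv nbr s) w' = feedback (wv nbr s) (wv' u)) : w' = wv' u := by
  obtain ⟨s, hs, hsu⟩ := exists_adj_of_not_mem hS hu
  obtain ⟨j, rfl⟩ := (adj_iff_exists_nbr_eq hnbr).1 hsu
  obtain ⟨x, rfl | rfl⟩ := mem_DG_iff.1 hw'
  · exfalso
    by_cases hx : x ∈ S
    · have hxu : nbr s j = x := center_eq_of_center_mem h hx
      exact hu (hxu ▸ hx)
    obtain ⟨t, ht, htx⟩ := exists_adj_of_not_mem hS hx
    have hpos := feedback_wv_wv_snd_pos hnbr htx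
    rw [h t ht, feedback_wv'_snd] at hpos
    exact lt_irrefl _ hpos
  · have hj : x = nbr s j := ((feedback_green_iff (h s hs) j.succ).2 rfl).symm
    rw [hj]

theorem wv_mem_of_not_mem (hnbr : ∀ v, Finset.univ.image (nbr v) = G.neighborFinset v)
    (hS : Dominating G S) (hu : u ∉ S) (hw' : w' ∈ DG nbr)
    (h : ∀ s ∈ S, feedback (wv nbr s) w' = feedback (wv nbr s) (wv nbr u)) :
    w' ∈ (insert u (G.neighborFinset u) \ S).image (wv nbr) := by
  obtain ⟨s, hs, hsu⟩ := exists_adj_of_not_mem hS hu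
  have hpos := feedback_wv_wv_snd_pos hnbr hsu
  rw [← h s hs] at hpos
  obtain ⟨i, hi⟩ := exists_eq_of_feedback_snd_pos hpos
  obtain ⟨x, rfl | rfl⟩ := mem_DG_iff.1 hw'
  · have hxS : x ∉ S := by
      intro hx
      obtain rfl : u = x := center_eq_of_center_mem h hx
      exact hu hx
    have hxu : x = u ∨ G.Adj x u := eq_or_adj_of_mem_DG hnbr (wv_mem_DG x) hi
    refine Finset.mem_image_of_mem _ (Finset.mem_sdiff.2 ⟨?_, hxS⟩)
    rw [Finset.mem_insert, G.mem_neighborFinset]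
    exact hxu.imp_right fun h => h.symm
  · rw [feedback_wv'_snd] at hpos
    exact absurd hpos (lt_irrefl _)

theorem card_insert_neighborFinset_sdiff_le_four
    (hnbr : ∀ v, Finset.univ.image (nbr v) = G.neighborFinset v) {s : V} (hs : s ∈ S)
    (hsu : G.Adj s u) : (insert u (G.neighborFinset u) \ S).card ≤ 4 := by
  have hsN : s ∈ insert u (G.neighborFinset u) :=
    Finset.mem_insert_of_mem ((G.mem_neighborFinset _ _).2 hsu.symm)
  calc (insert u (G.neighborFinset u) \ S).card
      ≤ ((insert u (G.neighborFinset u)).erase s).card :=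
        Finset.card_le_card fun x hx => Finset.mem_erase.2
          ⟨fun hxs => (Finset.mem_sdiff.1 hx).2 (hxs ▸ hs), (Finset.mem_sdiff.1 hx).1⟩
    _ = (insert u (G.neighborFinset u)).card - 1 := Finset.card_erase_of_mem hsN
    _ ≤ 4 := by
      have := Finset.card_insert_le u (G.neighborFinset u)
      have := card_neighborFinset_le_four hnbr u
      omega

theorem card_filter_feedback_eq_le_four
    (hnbr : ∀ v, Finset.univ.image (nbr v) = G.neighborFinset v) (hS : Dominating G S)
    (hw : w ∈ DG nbr) :
    ((DG nbr).filter fun w' => ∀ s ∈ S, feedback (wv nbr s) w' = feedback (wv nbr s) w).card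
      ≤ 4 := by
  by_cases hu : w 0 ∈ S
  · calc _ ≤ ({w} : Finset _).card := Finset.card_le_card fun w' hw' => Finset.mem_singleton.2
          (eq_of_center_mem hw (Finset.mem_filter.1 hw').1 (Finset.mem_filter.1 hw').2 hu)
      _ ≤ 4 := by simp
  obtain ⟨u, rfl | rfl⟩ := mem_DG_iff.1 hw
  · obtain ⟨s, hs, hsu⟩ := exists_adj_of_not_mem hS hu
    calc _ ≤ ((insert u (G.neighborFinset u) \ S).image (wv nbr)).card :=
          Finset.card_le_card fun w' hw' => wv_mem_of_not_mem hnbr hS hu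
            (Finset.mem_filter.1 hw').1 (Finset.mem_filter.1 hw').2
      _ ≤ _ := Finset.card_image_le
      _ ≤ 4 := card_insert_neighborFinset_sdiff_le_four hnbr hs hsu
  · calc _ ≤ ({wv' u} : Finset _).card :=
          Finset.card_le_card fun w' hw' => Finset.mem_singleton.2 <| eq_wv'_of_not_mem hnbr hS hu
            (Finset.mem_filter.1 hw').1 (Finset.mem_filter.1 hw').2
      _ ≤ 4 := by simp

theorem winsWithin_card_add_four (hnbr : ∀ v, Finset.univ.image (nbr v) = G.neighborFinset v)
    (hS : Dominating G S) (d : V) : WinsWithin (DG nbr) feedback (S.card + 4) := by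
  simpa using winsWithin_of_probes (DG nbr) feedback (S.toList.map (wv nbr)) (wv' d)
    (wv'_mem_DG d) (by simp [wv_mem_DG]) fun w hw => by
      simpa using card_filter_feedback_eq_le_four hnbr hS hw

end Graph

theorem wordle_domination_sandwich_general {V : Type*} [Fintype V] [DecidableEq V]
    (G : SimpleGraph V) [DecidableRel G.Adj] (nbr : V → Fin 4 → V)
    (hnbr : ∀ v, Finset.univ.image (nbr v) = G.neighborFinset v) :
    gamma G ≤ WNum (DG nbr) feedback ∧ WNum (DG nbr) feedback ≤ gamma G + 4 := by
  rcases isEmpty_or_nonempty V with _ | ⟨⟨d⟩⟩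
  · have hγ : gamma G = 0 := Nat.le_zero.1 (Nat.sInf_le ⟨∅, le_rfl, isEmptyElim⟩)
    simp [hγ, WNum_eq_zero_of_isEmpty]
  obtain ⟨S, hSγ, hS⟩ := exists_dominating_card_le_gamma G
  have hwin : S.card + 4 ∈ {ℓ | WinsWithin (DG nbr) feedback ℓ} :=
    winsWithin_card_add_four hnbr hS d
  exact ⟨gamma_le_of_winsWithin hnbr (Nat.sInf_mem ⟨_, hwin⟩),
    (Nat.sInf_le hwin).trans (by omega)⟩

/-- for a 4-regular graph `G`, `γ(G) ≤ W(D_G) ≤ γ(G) + 4`. -/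
theorem wordle_domination_sandwich {V : Type*} [Fintype V] [DecidableEq V]
    (G : SimpleGraph V) [DecidableRel G.Adj] (nbr : V → Fin 4 → V)
    (h4 : ∀ v, (G.neighborFinset v).card = 4)
    (hnbr : ∀ v, Finset.univ.image (nbr v) = G.neighborFinset v) :
    gamma G ≤ WNum (DG nbr) feedback ∧ WNum (DG nbr) feedback ≤ gamma G + 4 :=
  wordle_domination_sandwich_general G nbr hnbr
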